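/- Let G be a connected simple graph with at least one edge, let G' be the Type A Whitney flip of G along (H, v1, v2), and let φ be the map sending each edge {x, y} of G with both endpoints in H to {σ(x), σ(y)} and fixing every other edge of G. Then φ maps the edge set of each block of G bijectively onto the edge set of a block of G', and this induces a bijection between the blocks of G and the blocks of G' under which corresponding blocks have the same number of edges and the same maximum cycle length (with maximum cycle length 0 for blocks containing no cycle). -/

import Mathlib

open SimpleGraph

attribute [local instance] Classical.propDecidable

/-- A cut vertex of (the graph represented by) a subgraph `B`: a vertex of `B` whose
deletion (together with all incident edges) disconnects `B`. -/
def SimpleGraph.Subgraph.IsCutVertex {V : Type*} {G : SimpleGraph V} (B : G.Subgraph)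
    (v : V) : Prop :=
  v ∈ B.verts ∧ ¬ (B.deleteVerts {v}).coe.Preconnected

/-- A block of `G`: an induced connected subgraph without cut vertices that is maximal
with this property. -/
def SimpleGraph.Subgraph.IsBlock {V : Type*} {G : SimpleGraph V} (B : G.Subgraph) : Prop :=
  B.IsInduced ∧ B.coe.Connected ∧ (∀ v, ¬ B.IsCutVertex v) ∧
    ∀ B' : G.Subgraph, B'.IsInduced → B'.coe.Connected → (∀ v, ¬ B'.IsCutVertex v) →
      B ≤ B' → B = B'

/-- The maximum length of a cycle all of whose edges lie in the subgraph `B`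
(`0` if there is no such cycle). -/
noncomputable def maxCycleLength {V : Type*} {G : SimpleGraph V} (B : G.Subgraph) : ℕ :=
  sSup {n : ℕ | ∃ u : V, ∃ c : G.Walk u u, c.IsCycle ∧
    (∀ f ∈ c.edges, f ∈ B.edgeSet) ∧ c.length = n}

/-- The Type A Whitney flip of `G` along `(H, v1, v2)`: edges with both endpoints in `H`
are mapped by the swap of `v1` and `v2`; all other edges are kept. -/
def typeAFlip {V : Type*} [DecidableEq V] (G : SimpleGraph V) (v1 v2 : V) (H : Set V) :
    SimpleGraph V where
  Adj a b :=
    (Equiv.swap v1 v2 a ∈ H ∧ Equiv.swap v1 v2 b ∈ H ∧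
      G.Adj (Equiv.swap v1 v2 a) (Equiv.swap v1 v2 b)) ∨
    (¬(a ∈ H ∧ b ∈ H) ∧ G.Adj a b)
  symm := by
    constructor
    rintro a b (⟨ha, hb, h⟩ | ⟨hn, h⟩)
    · exact Or.inl ⟨hb, ha, h.symm⟩
    · exact Or.inr ⟨fun ⟨hb', ha'⟩ => hn ⟨ha', hb'⟩, h.symm⟩
  loopless := by
    constructor
    rintro a (⟨_, _, h⟩ | ⟨_, h⟩) <;> exact G.loopless.irrefl _ h

/-- The edge map of the Type A Whitney flip: an edge with both endpoints in `H` is mapped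
by the swap of `v1` and `v2`; every other edge is fixed. -/
noncomputable def phiA {V : Type*} [DecidableEq V] (v1 v2 : V) (H : Set V)
    (e : Sym2 V) : Sym2 V :=
  if ∀ x ∈ e, x ∈ H then e.map (Equiv.swap v1 v2) else e

/-!
The flip acts on edges by the involution `φ = phiA v₁ v₂ H`, which maps the edge set of `G` onto
that of `G'`. A block with an edge is determined by its edge set, and `φ` is monotone on edge sets,
so it suffices that `φ` maps edge sets spanning induced nonseparable subgraphs of `G` to such edge
sets of `G'`. If all edges lie inside `H`, the flip is just the relabelling by `σ = swap v₁ v₂`. If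
none does, nothing changes. Otherwise a path avoiding one of `v₁, v₂` from a vertex of
`H \ {v₁, v₂}` to a vertex outside `H` must leave `H` through the other one, so both lie in the
subgraph and the edge `v₁v₂` belongs to it. This edge lets every flipped edge `σa σb` be joined
back to `a` and `b`; and `v₁` is not a cut vertex of the flipped subgraph because every vertex
reaches `v₂` through edges fixed by `φ` followed by at most one edge into `v₁`, which `φ` turns
into an edge into `v₂`.

A cycle through `v₁` and `v₂` splits into two `v₁`–`v₂` paths, each lying entirely inside or
entirely outside `H`, which are flipped separately and glued back; by the same argument, every
other cycle lies on one side. Hence cycle lengths are preserved as well.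
-/

namespace EdgeSet

variable {V : Type*}

def verts (E : Set (Sym2 V)) : Set V := {v | ∃ e ∈ E, v ∈ e}

abbrev Linked (E : Set (Sym2 V)) : V → V → Prop :=
  Relation.ReflTransGen fun a b => s(a, b) ∈ E

def IsConnected (E : Set (Sym2 V)) : Prop :=
  ∀ x ∈ verts E, ∀ y ∈ verts E, Linked E x y

def NoCutVertex (E : Set (Sym2 V)) : Prop :=
  ∀ v, ∀ x ∈ verts E \ {v}, ∀ y ∈ verts E \ {v}, Linked {e ∈ E | v ∉ e} x y

variable {E F : Set (Sym2 V)} {x y : V}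

lemma mem_verts_left (h : s(x, y) ∈ E) : x ∈ verts E := ⟨_, h, Sym2.mem_mk_left x y⟩

lemma mem_verts_right (h : s(x, y) ∈ E) : y ∈ verts E := ⟨_, h, Sym2.mem_mk_right x y⟩

lemma verts_mono (h : E ⊆ F) : verts E ⊆ verts F := fun _ ⟨e, he, hv⟩ => ⟨e, h he, hv⟩

lemma verts_subset_of_subset_sym2 {H : Set V} (h : E ⊆ H.sym2) : verts E ⊆ H :=
  fun _ ⟨_, he, hv⟩ => Set.mem_sym2_iff_subset.1 (h he) hv

lemma verts_image_map (f : V → V) : verts (Sym2.map f '' E) = f '' verts E := by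
  ext v
  constructor
  · rintro ⟨_, ⟨e, he, rfl⟩, hv⟩
    obtain ⟨w, hw, rfl⟩ := Sym2.mem_map.1 hv
    exact ⟨w, ⟨e, he, hw⟩, rfl⟩
  · rintro ⟨w, ⟨e, he, hw⟩, rfl⟩
    exact ⟨_, ⟨e, he, rfl⟩, Sym2.mem_map.2 ⟨w, hw, rfl⟩⟩

lemma Linked.symm (h : Linked E x y) : Linked E y x := by
  induction h with
  | refl => exact .refl
  | tail _ hstep ih => exact .head (Sym2.eq_swap ▸ hstep) ih

lemma Linked.mono (hEF : E ⊆ F) (h : Linked E x y) : Linked F x y :=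
  Relation.ReflTransGen.mono (fun _ _ hab => hEF hab) _ _ h

lemma Linked.map (f : V → V) (h : Linked E x y) : Linked (Sym2.map f '' E) (f x) (f y) :=
  Relation.ReflTransGen.lift f (fun a b hab => ⟨s(a, b), hab, Sym2.map_mk f a b⟩) _ _ h

lemma Linked.exists_exit {P : V → Prop} (h : Linked E x y) (hx : P x) (hy : ¬ P y) :
    ∃ a b, s(a, b) ∈ E ∧ P a ∧ ¬ P b ∧ Linked {e ∈ E | ∀ z ∈ e, P z} x a := by
  induction h using Relation.ReflTransGen.head_induction_on with
  | refl => exact absurd hx hy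
  | @head x c hxc _ ih =>
    by_cases hc : P c
    · obtain ⟨a, b, hab, ha, hb, hca⟩ := ih hc
      refine ⟨a, b, hab, ha, hb, .head ⟨hxc, fun z hz => ?_⟩ hca⟩
      rcases Sym2.mem_iff.1 hz with rfl | rfl
      exacts [hx, hc]
    · exact ⟨x, c, hxc, hx, hc, .refl⟩

lemma IsConnected.image_map (f : V → V) (hE : IsConnected E) :
    IsConnected (Sym2.map f '' E) := by
  rw [IsConnected, verts_image_map]
  rintro _ ⟨x, hx, rfl⟩ _ ⟨y, hy, rfl⟩
  exact (hE x hx y hy).map f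

lemma NoCutVertex.image_equiv (f : V ≃ V) (hE : NoCutVertex E) :
    NoCutVertex (Sym2.map f '' E) := by
  rw [NoCutVertex, verts_image_map]
  rintro v _ ⟨⟨x, hx, rfl⟩, hxv : f x ≠ v⟩ _ ⟨⟨y, hy, rfl⟩, hyv : f y ≠ v⟩
  have hx' : x ≠ f.symm v := by rintro rfl; simp at hxv
  have hy' : y ≠ f.symm v := by rintro rfl; simp at hyv
  refine ((hE _ x ⟨hx, hx'⟩ y ⟨hy, hy'⟩).map f).mono ?_
  rintro _ ⟨e, ⟨he, hve⟩, rfl⟩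
  refine ⟨⟨e, he, rfl⟩, fun hv => hve ?_⟩
  obtain ⟨w, hw, rfl⟩ := Sym2.mem_map.1 hv
  rwa [Equiv.symm_apply_apply]

end EdgeSet

open EdgeSet

namespace SimpleGraph

variable {V : Type*} {K : SimpleGraph V}

lemma Walk.linked {E : Set (Sym2 V)} {u v : V} (p : K.Walk u v)
    (hp : ∀ e ∈ p.edges, e ∈ E) : Linked E u v := by
  induction p with
  | nil => exact .refl
  | cons h p ih =>
    exact .head (hp _ (List.mem_cons_self ..)) (ih fun e he => hp e (List.mem_cons_of_mem _ he))

def subgraphOfEdgeSet (E : Set (Sym2 V)) (h : E ⊆ K.edgeSet) : K.Subgraph where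
  verts := verts E
  Adj a b := s(a, b) ∈ E
  adj_sub hab := h hab
  edge_vert hab := mem_verts_left hab
  symm := ⟨fun _ _ hab => by rwa [Sym2.eq_swap]⟩

@[simp]
lemma edgeSet_subgraphOfEdgeSet {E : Set (Sym2 V)} (h : E ⊆ K.edgeSet) :
    (K.subgraphOfEdgeSet E h).edgeSet = E := by
  ext e
  induction e using Sym2.ind
  rfl

lemma subgraphOfEdgeSet_mono {E F : Set (Sym2 V)} (hE : E ⊆ K.edgeSet) (hF : F ⊆ K.edgeSet)
    (hEF : E ⊆ F) : K.subgraphOfEdgeSet E hE ≤ K.subgraphOfEdgeSet F hF :=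
  ⟨verts_mono hEF, fun _ _ hab => hEF hab⟩

lemma subgraphOfEdgeSet_congr {E F : Set (Sym2 V)} (hE : E ⊆ K.edgeSet) (hF : F ⊆ K.edgeSet)
    (h : E = F) : K.subgraphOfEdgeSet E hE = K.subgraphOfEdgeSet F hF := by
  subst h
  rfl

structure IsNonseparableEdgeSet (K : SimpleGraph V) (E : Set (Sym2 V)) : Prop where
  subset : E ⊆ K.edgeSet
  nonempty : E.Nonempty
  induced : ∀ x ∈ verts E, ∀ y ∈ verts E, K.Adj x y → s(x, y) ∈ E
  connected : IsConnected E
  noCutVertex : NoCutVertex E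

lemma isNonseparableEdgeSet_singleton {x y : V} (h : K.Adj x y) :
    K.IsNonseparableEdgeSet {s(x, y)} := by
  have hverts {a : V} (ha : a ∈ verts {s(x, y)}) : a = x ∨ a = y := by
    obtain ⟨e, rfl, hae⟩ := ha
    exact Sym2.mem_iff.1 hae
  have hpair {a b : V} (ha : a = x ∨ a = y) (hb : b = x ∨ b = y) (hab : a ≠ b) :
      s(a, b) = s(x, y) := by
    rcases ha with rfl | rfl <;> rcases hb with rfl | rfl
    exacts [absurd rfl hab, rfl, Sym2.eq_swap, absurd rfl hab]
  refine ⟨by simpa using h, Set.singleton_nonempty _, fun a ha b hb hab => ?_, fun a ha b hb => ?_,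
    fun v a ⟨ha, hav⟩ b ⟨hb, hbv⟩ => ?_⟩
  · exact hpair (hverts ha) (hverts hb) hab.ne
  · rcases eq_or_ne a b with rfl | hab
    · exact .refl
    · exact .single (hpair (hverts ha) (hverts hb) hab)
  · rcases eq_or_ne a b with rfl | hab
    · exact .refl
    · have he := hpair (hverts ha) (hverts hb) hab
      refine .single ⟨he, ?_⟩
      rw [Sym2.mem_iff, not_or]
      exact ⟨Ne.symm hav, Ne.symm hbv⟩

namespace Subgraph

variable {B : K.Subgraph}

def IsNonseparable (B : K.Subgraph) : Prop :=
  B.IsInduced ∧ B.coe.Connected ∧ ∀ v, ¬ B.IsCutVertex v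

lemma isBlock_iff : B.IsBlock ↔ B.IsNonseparable ∧
    ∀ B' : K.Subgraph, B'.IsNonseparable → B ≤ B' → B = B' :=
  ⟨fun ⟨hi, hc, hv, hmax⟩ => ⟨⟨hi, hc, hv⟩, fun B' ⟨hi', hc', hv'⟩ => hmax B' hi' hc' hv'⟩,
    fun ⟨⟨hi, hc, hv⟩, hmax⟩ => ⟨hi, hc, hv, fun B' hi' hc' hv' => hmax B' ⟨hi', hc', hv'⟩⟩⟩

lemma subgraphOfEdgeSet_edgeSet (hB : ∀ v ∈ B.verts, ∃ w, B.Adj v w) :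
    K.subgraphOfEdgeSet B.edgeSet B.edgeSet_subset = B := by
  refine Subgraph.ext (Set.ext fun v => ⟨?_, fun hv => ?_⟩) rfl
  · rintro ⟨e, he, hve⟩
    exact mem_verts_of_mem_edge he hve
  · obtain ⟨w, hvw⟩ := hB v hv
    exact mem_verts_left (B.mem_edgeSet.2 hvw)

lemma preconnected_iff_linked :
    B.coe.Preconnected ↔ ∀ x ∈ B.verts, ∀ y ∈ B.verts, Linked B.edgeSet x y := by
  refine ⟨fun h x hx y hy => ?_, fun h => ?_⟩
  · obtain ⟨p, hp⟩ := (preconnected_iff_forall_exists_walk_subgraph B).1 ⟨h⟩ hx hy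
    exact p.linked fun e he => edgeSet_mono hp (p.mem_edges_toSubgraph.2 he)
  · rintro ⟨x, hx⟩ ⟨y, hy⟩
    suffices ∀ y, Linked B.edgeSet x y → ∀ hy : y ∈ B.verts,
        B.coe.Reachable ⟨x, hx⟩ ⟨y, hy⟩ from this y (h x hx y hy) hy
    intro y hxy
    induction hxy with
    | refl => exact fun _ => .rfl
    | tail _ hbc ih =>
      exact fun _ => (ih (B.edge_vert hbc)).trans (Adj.reachable (G := B.coe) hbc)

lemma edgeSet_deleteVerts_singleton (v : V) :
    (B.deleteVerts {v}).edgeSet = {e ∈ B.edgeSet | v ∉ e} := by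
  ext e
  induction e using Sym2.ind with
  | _ a b =>
    rw [Subgraph.mem_edgeSet, deleteVerts_adj]
    simp only [Set.mem_singleton_iff, Set.mem_ofPred_eq, Subgraph.mem_edgeSet, Sym2.mem_iff,
      not_or]
    exact ⟨fun ⟨_, ha, _, hb, hab⟩ => ⟨hab, Ne.symm ha, Ne.symm hb⟩,
      fun ⟨hab, ha, hb⟩ => ⟨B.edge_vert hab, Ne.symm ha, B.edge_vert hab.symm, Ne.symm hb, hab⟩⟩

lemma isCutVertex_iff {v : V} : B.IsCutVertex v ↔ v ∈ B.verts ∧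
    ¬ ∀ x ∈ B.verts \ {v}, ∀ y ∈ B.verts \ {v}, Linked {e ∈ B.edgeSet | v ∉ e} x y := by
  rw [IsCutVertex, preconnected_iff_linked, deleteVerts_verts, edgeSet_deleteVerts_singleton]

end Subgraph

lemma isNonseparable_subgraphOfEdgeSet_iff {E : Set (Sym2 V)} (h : E ⊆ K.edgeSet) :
    (K.subgraphOfEdgeSet E h).IsNonseparable ↔ K.IsNonseparableEdgeSet E := by
  have hcut (hc : IsConnected E) :
      (∀ v, ¬ (K.subgraphOfEdgeSet E h).IsCutVertex v) ↔ NoCutVertex E := by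
    simp only [Subgraph.isCutVertex_iff, edgeSet_subgraphOfEdgeSet, not_and, not_not]
    refine ⟨fun H v => ?_, fun H v _ => H v⟩
    by_cases hv : v ∈ verts E
    · exact H v hv
    · exact fun x hx y hy => (hc x hx.1 y hy.1).mono fun e he => ⟨he, fun hve => hv ⟨e, he, hve⟩⟩
  rw [Subgraph.IsNonseparable, connected_iff, Subgraph.preconnected_iff_linked,
    edgeSet_subgraphOfEdgeSet]
  constructor
  · rintro ⟨hi, ⟨hc, ⟨_, e, he, -⟩⟩, hv⟩
    exact ⟨h, ⟨e, he⟩, hi, hc, (hcut hc).1 hv⟩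
  · rintro ⟨-, ⟨e, he⟩, hi, hc, hv⟩
    induction e using Sym2.ind
    exact ⟨hi, ⟨hc, ⟨_, mem_verts_left he⟩⟩, (hcut hc).2 hv⟩

namespace Subgraph

variable {B : K.Subgraph}

lemma exists_adj_of_connected (hB : B.coe.Connected) (hE : B.edgeSet.Nonempty) :
    ∀ v ∈ B.verts, ∃ w, B.Adj v w := by
  obtain ⟨e, he⟩ := hE
  induction e using Sym2.ind with
  | _ a b =>
    have : Nontrivial B.verts := ⟨⟨a, B.edge_vert he⟩, ⟨b, B.edge_vert (B.adj_symm he)⟩,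
      fun h => (B.adj_sub he).ne (congrArg Subtype.val h)⟩
    exact fun v hv => Preconnected.exists_adj_of_nontrivial ⟨hB.preconnected⟩ ⟨v, hv⟩

lemma IsNonseparable.isNonseparableEdgeSet (hB : B.IsNonseparable) (hE : B.edgeSet.Nonempty) :
    K.IsNonseparableEdgeSet B.edgeSet := by
  rw [← isNonseparable_subgraphOfEdgeSet_iff B.edgeSet_subset,
    subgraphOfEdgeSet_edgeSet (exists_adj_of_connected hB.2.1 hE)]
  exact hB

/-- A block without edges would be a single vertex, strictly contained in the nonseparable
subgraph spanned by an edge at that vertex. -/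
lemma IsBlock.edgeSet_nonempty [Nontrivial V] (hK : K.Preconnected) (hB : B.IsBlock) :
    B.edgeSet.Nonempty := by
  by_contra hE
  rw [Set.not_nonempty_iff_eq_empty] at hE
  obtain ⟨⟨x, hx⟩⟩ := hB.2.1.nonempty
  obtain ⟨y, hxy⟩ := hK.exists_adj_of_nontrivial x
  have hsub : {s(x, y)} ⊆ K.edgeSet := by simpa using hxy
  have hB' := (isNonseparable_subgraphOfEdgeSet_iff hsub).2
    (isNonseparableEdgeSet_singleton hxy)
  have hle : B ≤ K.subgraphOfEdgeSet {s(x, y)} hsub := by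
    refine ⟨fun z hz => ?_, fun a b hab => ?_⟩
    · have hxz := preconnected_iff_linked.1 hB.2.1.preconnected x hx z hz
      rw [hE] at hxz
      obtain rfl : x = z := by
        induction hxz with
        | refl => rfl
        | tail _ h => exact absurd h (Set.notMem_empty _)
      exact mem_verts_left rfl
    · exact absurd (B.mem_edgeSet.2 hab) (hE ▸ Set.notMem_empty _)
  have := congrArg Subgraph.edgeSet ((isBlock_iff.1 hB).2 _ hB' hle)
  rw [hE, edgeSet_subgraphOfEdgeSet] at this
  exact Set.singleton_ne_empty _ this.symm

lemma IsBlock.exists_adj [Nontrivial V] (hK : K.Preconnected) (hB : B.IsBlock) :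
    ∀ v ∈ B.verts, ∃ w, B.Adj v w :=
  exists_adj_of_connected hB.2.1 (hB.edgeSet_nonempty hK)

end Subgraph

lemma Walk.mem_support_tail_of_ne {u v z : V} {p : K.Walk u v} (hz : z ∈ p.support) (hzu : z ≠ u) :
    z ∈ p.support.tail :=
  (List.mem_cons.1 (p.cons_tail_support ▸ hz)).resolve_left hzu

lemma Walk.IsPath.mem_support_tail_iff {u v z : V} {p : K.Walk u v} (hp : p.IsPath) :
    z ∈ p.support.tail ↔ z ∈ p.support ∧ z ≠ u := by
  have hnd := p.cons_tail_support ▸ hp.support_nodup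
  refine ⟨fun h => ⟨List.mem_of_mem_tail h, fun hzu => (List.nodup_cons.1 hnd).1 (hzu ▸ h)⟩,
    fun ⟨h, hzu⟩ => Walk.mem_support_tail_of_ne h hzu⟩

lemma Walk.IsCycle.noCutVertex [DecidableEq V] {u : V} {c : K.Walk u u} (hc : c.IsCycle) :
    NoCutVertex c.edgeSet := by
  rintro v a ⟨⟨_, ha, hae⟩, hav : a ≠ v⟩ b ⟨⟨_, hb, hbe⟩, hbv : b ≠ v⟩
  have ha' := c.mem_support_of_mem_edges ha hae
  set d := c.rotate a ha'
  have hbd : b ∈ d.support := (c.mem_support_rotate_iff a ha').2 (c.mem_support_of_mem_edges hb hbe)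
  have hnodup : ((d.takeUntil b hbd).support.tail ++ (d.dropUntil b hbd).support.tail).Nodup := by
    rw [← Walk.tail_support_append, d.take_spec hbd]
    exact (hc.rotate ha').support_nodup
  have hd (e : Sym2 V) (he : e ∈ d.edges) : e ∈ c.edgeSet := (c.rotate_edges a ha').mem_iff.1 he
  by_cases hvP : v ∈ (d.takeUntil b hbd).support
  · have hvQ : v ∉ (d.dropUntil b hbd).support := fun hvQ =>
      List.disjoint_of_nodup_append hnodup (Walk.mem_support_tail_of_ne hvP hav.symm)
        (Walk.mem_support_tail_of_ne hvQ hbv.symm)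
    exact Linked.symm <| (d.dropUntil b hbd).linked fun e he =>
      ⟨hd e (d.edges_dropUntil_subset_edges hbd he),
        fun hve => hvQ (Walk.mem_support_of_mem_edges he hve)⟩
  · exact (d.takeUntil b hbd).linked fun e he =>
      ⟨hd e (d.edges_takeUntil_subset_edges hbd he),
        fun hve => hvP (Walk.mem_support_of_mem_edges he hve)⟩

end SimpleGraph

section phiA

variable {V : Type*} [DecidableEq V] {v1 v2 : V} {H : Set V} {e : Sym2 V}

lemma phiA_of_mem_sym2 (he : e ∈ H.sym2) : phiA v1 v2 H e = e.map (Equiv.swap v1 v2) :=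
  if_pos (Set.mem_sym2_iff_subset.1 he)

lemma phiA_of_notMem_sym2 (he : e ∉ H.sym2) : phiA v1 v2 H e = e :=
  if_neg fun h => he (Set.mem_sym2_iff_subset.2 h)

lemma swap_mem_iff (h1 : v1 ∈ H) (h2 : v2 ∈ H) {x : V} : Equiv.swap v1 v2 x ∈ H ↔ x ∈ H := by
  rcases eq_or_ne x v1 with rfl | hx1
  · simp [h1, h2]
  rcases eq_or_ne x v2 with rfl | hx2
  · simp [h1, h2]
  rw [Equiv.swap_apply_of_ne_of_ne hx1 hx2]

lemma map_swap_mem_sym2_iff (h1 : v1 ∈ H) (h2 : v2 ∈ H) :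
    e.map (Equiv.swap v1 v2) ∈ H.sym2 ↔ e ∈ H.sym2 := by
  induction e using Sym2.ind
  simp only [Sym2.map_mk, Set.mk_mem_sym2_iff, swap_mem_iff h1 h2]

lemma phiA_involutive (h1 : v1 ∈ H) (h2 : v2 ∈ H) : Function.Involutive (phiA v1 v2 H) := by
  intro e
  by_cases he : e ∈ H.sym2
  · rw [phiA_of_mem_sym2 he, phiA_of_mem_sym2 ((map_swap_mem_sym2_iff h1 h2).2 he),
      Sym2.map_map]
    simp
  · rw [phiA_of_notMem_sym2 he, phiA_of_notMem_sym2 he]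

lemma phiA_comm : phiA v2 v1 H = phiA v1 v2 H := by
  ext1 e
  rw [phiA, phiA, Equiv.swap_comm]

lemma mem_edgeSet_typeAFlip_iff {G : SimpleGraph V} (h1 : v1 ∈ H) (h2 : v2 ∈ H) :
    e ∈ (typeAFlip G v1 v2 H).edgeSet ↔ phiA v1 v2 H e ∈ G.edgeSet := by
  induction e using Sym2.ind with
  | _ a b =>
    by_cases hab : s(a, b) ∈ H.sym2
    · rw [phiA_of_mem_sym2 hab, Sym2.map_mk]
      simp only [mem_edgeSet, typeAFlip, swap_mem_iff h1 h2]
      exact ⟨fun h => h.elim (·.2.2) fun h' => absurd hab h'.1, fun h => .inl ⟨hab.1, hab.2, h⟩⟩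
    · rw [phiA_of_notMem_sym2 hab]
      simp only [mem_edgeSet, typeAFlip, swap_mem_iff h1 h2]
      exact ⟨fun h => h.elim (fun h' => absurd ⟨h'.1, h'.2.1⟩ hab) (·.2), fun h => .inr ⟨hab, h⟩⟩

end phiA

/-- `G'` is the Type A Whitney flip of `G` along `(H, v₁, v₂)`. It is described through its edge
set, so that exchanging `G` and `G'` gives again a flip (`WhitneyFlip.symm`). -/
structure WhitneyFlip (V : Type*) [DecidableEq V] where
  G : SimpleGraph V
  G' : SimpleGraph V
  v₁ : V
  v₂ : V
  H : Set V
  v₁_mem : v₁ ∈ H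
  v₂_mem : v₂ ∈ H
  adj : G.Adj v₁ v₂
  mem_of_adj : ∀ ⦃x y⦄, G.Adj x y → x ∈ H → x ≠ v₁ → x ≠ v₂ → y ∈ H
  mem_edgeSet_iff : ∀ e, e ∈ G'.edgeSet ↔ phiA v₁ v₂ H e ∈ G.edgeSet

namespace WhitneyFlip

variable {V : Type*} [DecidableEq V] (S : WhitneyFlip V)

abbrev σ : Equiv.Perm V := Equiv.swap S.v₁ S.v₂

noncomputable def φ : Sym2 V → Sym2 V := phiA S.v₁ S.v₂ S.H

lemma v₁_ne_v₂ : S.v₁ ≠ S.v₂ := S.adj.ne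

lemma mem_edgeSet_iff_φ {e : Sym2 V} : e ∈ S.G'.edgeSet ↔ S.φ e ∈ S.G.edgeSet :=
  S.mem_edgeSet_iff e

lemma φ_of_mem_sym2 {e : Sym2 V} (he : e ∈ S.H.sym2) : S.φ e = e.map S.σ := phiA_of_mem_sym2 he

lemma φ_of_notMem_sym2 {e : Sym2 V} (he : e ∉ S.H.sym2) : S.φ e = e := phiA_of_notMem_sym2 he

lemma φ_φ (e : Sym2 V) : S.φ (S.φ e) = e := phiA_involutive S.v₁_mem S.v₂_mem e

lemma φ_injective : Function.Injective S.φ := (phiA_involutive S.v₁_mem S.v₂_mem).injective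

lemma σ_mem_iff {x : V} : S.σ x ∈ S.H ↔ x ∈ S.H := swap_mem_iff S.v₁_mem S.v₂_mem

lemma φ_mem_edgeSet {e : Sym2 V} (he : e ∈ S.G.edgeSet) : S.φ e ∈ S.G'.edgeSet :=
  S.mem_edgeSet_iff_φ.2 (by rwa [S.φ_φ])

lemma mem_edgeSet_of_notMem_sym2 {e : Sym2 V} (he : e ∈ S.G.edgeSet) (hH : e ∉ S.H.sym2) :
    e ∈ S.G'.edgeSet := by
  simpa [S.φ_of_notMem_sym2 hH] using S.φ_mem_edgeSet he

lemma image_φ_subset {E : Set (Sym2 V)} (hE : E ⊆ S.G.edgeSet) : S.φ '' E ⊆ S.G'.edgeSet := by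
  rintro _ ⟨e, he, rfl⟩
  exact S.φ_mem_edgeSet (hE he)

lemma φ_v₁_v₂ : S.φ s(S.v₁, S.v₂) = s(S.v₁, S.v₂) := by
  rw [S.φ_of_mem_sym2 (Set.mk_mem_sym2_iff.2 ⟨S.v₁_mem, S.v₂_mem⟩), Sym2.map_mk,
    Equiv.swap_apply_left, Equiv.swap_apply_right, Sym2.eq_swap]

def symm : WhitneyFlip V where
  G := S.G'
  G' := S.G
  v₁ := S.v₁
  v₂ := S.v₂
  H := S.H
  v₁_mem := S.v₁_mem
  v₂_mem := S.v₂_mem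
  adj := by
    rw [← mem_edgeSet, S.mem_edgeSet_iff_φ, S.φ_v₁_v₂]
    exact S.adj
  mem_of_adj x y hxy hx hx₁ hx₂ := by
    by_contra hy
    have hxy' : s(x, y) ∉ S.H.sym2 := fun h => hy h.2
    rw [← mem_edgeSet, S.mem_edgeSet_iff_φ, S.φ_of_notMem_sym2 hxy'] at hxy
    exact hy (S.mem_of_adj hxy hx hx₁ hx₂)
  mem_edgeSet_iff e := by
    rw [S.mem_edgeSet_iff_φ]
    exact iff_of_eq (congrArg (· ∈ S.G.edgeSet) (S.φ_φ e)).symm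

def swap : WhitneyFlip V where
  G := S.G
  G' := S.G'
  v₁ := S.v₂
  v₂ := S.v₁
  H := S.H
  v₁_mem := S.v₂_mem
  v₂_mem := S.v₁_mem
  adj := S.adj.symm
  mem_of_adj x y hxy hx hx₂ hx₁ := S.mem_of_adj hxy hx hx₁ hx₂
  mem_edgeSet_iff e := by rw [phiA_comm]; exact S.mem_edgeSet_iff e

@[simp] lemma symm_φ : S.symm.φ = S.φ := rfl

@[simp] lemma swap_φ : S.swap.φ = S.φ := phiA_comm (H := S.H)

section EdgeSets

variable {E F : Set (Sym2 V)} {x y : V}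

lemma σ_v₁ : S.σ S.v₁ = S.v₂ := Equiv.swap_apply_left _ _

lemma σ_v₂ : S.σ S.v₂ = S.v₁ := Equiv.swap_apply_right _ _

lemma σ_of_ne (h₁ : x ≠ S.v₁) (h₂ : x ≠ S.v₂) : S.σ x = x := Equiv.swap_apply_of_ne_of_ne h₁ h₂

lemma image_φ_image_φ (E : Set (Sym2 V)) : S.φ '' (S.φ '' E) = E := by
  rw [Set.image_image, funext S.φ_φ, Set.image_id']

lemma notMem_φ {v : V} {e : Sym2 V} (hv : v ∉ e) (hv₁ : v ≠ S.v₁) (hv₂ : v ≠ S.v₂) :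
    v ∉ S.φ e := by
  by_cases he : e ∈ S.H.sym2
  · rw [S.φ_of_mem_sym2 he]
    intro hmem
    obtain ⟨w, hw, hwv⟩ := Sym2.mem_map.1 hmem
    rw [← S.σ_of_ne hv₁ hv₂, S.σ.injective.eq_iff] at hwv
    exact hv (hwv ▸ hw)
  · rwa [S.φ_of_notMem_sym2 he]

lemma image_φ_of_subset_sym2 (h : E ⊆ S.H.sym2) : S.φ '' E = Sym2.map S.σ '' E :=
  Set.image_congr fun _ he => S.φ_of_mem_sym2 (h he)

lemma image_φ_of_disjoint (h : ∀ e ∈ E, e ∉ S.H.sym2) : S.φ '' E = E :=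
  (Set.image_congr fun e he => S.φ_of_notMem_sym2 (h e he)).trans (Set.image_id' E)

lemma v₂_mem_verts_of_linked (hE : E ⊆ S.G.edgeSet) {a b : V}
    (h : Linked {e ∈ E | S.v₁ ∉ e} a b) (ha : a ∈ S.H) (hb : b ∉ S.H) : S.v₂ ∈ verts E := by
  obtain ⟨x, y, ⟨hxy, hx₁⟩, hx, hy, -⟩ := h.exists_exit (P := (· ∈ S.H)) ha hb
  have hx₂ : x = S.v₂ := by
    by_contra hx₂
    exact hy (S.mem_of_adj (hE hxy) hx (fun h => hx₁ (h ▸ Sym2.mem_mk_left _ _)) hx₂)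
  exact hx₂ ▸ mem_verts_left hxy

lemma eq_or_exists_mem_ne {e : Sym2 V} (he : e ∈ S.G.edgeSet) (heH : e ∈ S.H.sym2) :
    e = s(S.v₁, S.v₂) ∨ ∃ a ∈ e, a ∈ S.H ∧ a ≠ S.v₁ ∧ a ≠ S.v₂ := by
  induction e using Sym2.ind with
  | _ p q =>
    have hpq : p ≠ q := (S.G.mem_edgeSet.1 he).ne
    obtain ⟨hp, hq⟩ := Set.mk_mem_sym2_iff.1 heH
    by_cases hp' : p = S.v₁ ∨ p = S.v₂
    · by_cases hq' : q = S.v₁ ∨ q = S.v₂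
      · left
        rcases hp' with rfl | rfl <;> rcases hq' with rfl | rfl <;> simp_all [Sym2.eq_swap]
      · rw [not_or] at hq'
        exact .inr ⟨q, Sym2.mem_mk_right p q, hq, hq'⟩
    · rw [not_or] at hp'
      exact .inr ⟨p, Sym2.mem_mk_left p q, hp, hp'⟩

lemma subset_sym2_or_mem_verts_or_disjoint (hE : E ⊆ S.G.edgeSet) (hcut : NoCutVertex E) :
    E ⊆ S.H.sym2 ∨ (S.v₁ ∈ verts E ∧ S.v₂ ∈ verts E) ∨ ∀ e ∈ E, e ∉ S.H.sym2 := by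
  by_contra! ⟨hin, hgates, e, he, heH⟩
  obtain ⟨f, hf, hfH⟩ := Set.not_subset.1 hin
  obtain ⟨b, hbf, hb⟩ : ∃ b ∈ f, b ∉ S.H := by
    by_contra! h
    exact hfH (Set.mem_sym2_iff_subset.2 h)
  rcases S.eq_or_exists_mem_ne (hE he) heH with rfl | ⟨a, hae, ha, ha₁, ha₂⟩
  · exact hgates (mem_verts_left he) (mem_verts_right he)
  have hav : a ∈ verts E := ⟨e, he, hae⟩
  have hbv : b ∈ verts E := ⟨f, hf, hbf⟩
  have hb₁ : b ≠ S.v₁ := fun h => hb (h ▸ S.v₁_mem)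
  have hb₂ : b ≠ S.v₂ := fun h => hb (h ▸ S.v₂_mem)
  exact hgates (S.swap.v₂_mem_verts_of_linked hE (hcut _ a ⟨hav, ha₂⟩ b ⟨hbv, hb₂⟩) ha hb)
    (S.v₂_mem_verts_of_linked hE (hcut _ a ⟨hav, ha₁⟩ b ⟨hbv, hb₁⟩) ha hb)

lemma σ_mem_verts (h : s(S.v₁, S.v₂) ∈ F) (hx : x ∈ verts F) : S.σ x ∈ verts F := by
  rcases eq_or_ne x S.v₁ with rfl | hx₁
  · exact S.σ_v₁ ▸ mem_verts_right h
  rcases eq_or_ne x S.v₂ with rfl | hx₂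
  · exact S.σ_v₂ ▸ mem_verts_left h
  · rwa [S.σ_of_ne hx₁ hx₂]

lemma linked_σ (h : s(S.v₁, S.v₂) ∈ F) (x : V) : Linked (S.φ '' F) x (S.σ x) := by
  have h' : s(S.v₁, S.v₂) ∈ S.φ '' F := ⟨_, h, S.φ_v₁_v₂⟩
  rcases eq_or_ne x S.v₁ with rfl | hx₁
  · exact S.σ_v₁ ▸ .single h'
  rcases eq_or_ne x S.v₂ with rfl | hx₂
  · exact S.σ_v₂ ▸ Linked.symm (.single h')
  · rw [S.σ_of_ne hx₁ hx₂]

/-- With the edge `v₁v₂` at hand, an edge `ab` inside `H` can be replaced by the path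
`a, σ a, σ b, b` of flipped edges. -/
lemma linked_image_φ (h : s(S.v₁, S.v₂) ∈ F) (hxy : Linked F x y) : Linked (S.φ '' F) x y := by
  induction hxy with
  | refl => exact .refl
  | @tail a b _ hab ih =>
    refine ih.trans ?_
    by_cases hH : s(a, b) ∈ S.H.sym2
    · have hσ : Linked (S.φ '' F) (S.σ a) (S.σ b) :=
        .single ⟨_, hab, by rw [S.φ_of_mem_sym2 hH, Sym2.map_mk]⟩
      exact ((S.linked_σ h a).trans hσ).trans (S.linked_σ h b).symm
    · exact .single ⟨_, hab, S.φ_of_notMem_sym2 hH⟩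

lemma verts_image_φ_subset (h : s(S.v₁, S.v₂) ∈ E) : verts (S.φ '' E) ⊆ verts E := by
  rintro z ⟨_, ⟨e, he, rfl⟩, hz⟩
  by_cases hH : e ∈ S.H.sym2
  · rw [S.φ_of_mem_sym2 hH] at hz
    obtain ⟨w, hw, rfl⟩ := Sym2.mem_map.1 hz
    exact S.σ_mem_verts h ⟨e, he, hw⟩
  · rw [S.φ_of_notMem_sym2 hH] at hz
    exact ⟨e, he, hz⟩

lemma verts_image_φ (h : s(S.v₁, S.v₂) ∈ E) : verts (S.φ '' E) = verts E := by
  refine (S.verts_image_φ_subset h).antisymm ?_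
  have h' := S.verts_image_φ_subset (E := S.φ '' E) ⟨_, h, S.φ_v₁_v₂⟩
  rwa [S.image_φ_image_φ] at h'

lemma linked_v₂_of_notMem (hE : E ⊆ S.G.edgeSet) (hcut : NoCutVertex E)
    (h : s(S.v₁, S.v₂) ∈ E) (hx : x ∈ verts E) (hxH : x ∉ S.H) :
    Linked {f ∈ S.φ '' E | S.v₁ ∉ f} x S.v₂ := by
  have hx₁ : x ≠ S.v₁ := fun h => hxH (h ▸ S.v₁_mem)
  obtain ⟨a, b, ⟨hab, hab₁⟩, ha, hb, hxa⟩ :=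
    (hcut S.v₁ x ⟨hx, hx₁⟩ S.v₂ ⟨mem_verts_right h, S.v₁_ne_v₂.symm⟩).exists_exit
      (P := (· ∉ S.H)) hxH (not_not.2 S.v₂_mem)
  have hb₁ : b ≠ S.v₁ := fun hb₁ => hab₁ (hb₁ ▸ Sym2.mem_mk_right a b)
  have hb₂ : b = S.v₂ := by
    by_contra hb₂
    exact ha (S.mem_of_adj (hE hab).symm (not_not.1 hb) hb₁ hb₂)
  subst hb₂
  refine (hxa.mono ?_).tail ⟨⟨_, hab, S.φ_of_notMem_sym2 fun h => ha h.1⟩, hab₁⟩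
  rintro e ⟨⟨he, he₁⟩, heH⟩
  have heH' : e ∉ S.H.sym2 := by
    induction e using Sym2.ind with
    | _ p q => exact fun h => heH p (Sym2.mem_mk_left p q) h.1
  exact ⟨⟨e, he, S.φ_of_notMem_sym2 heH'⟩, he₁⟩

lemma linked_v₂_of_mem (hE : E ⊆ S.G.edgeSet) (hcut : NoCutVertex E)
    (h : s(S.v₁, S.v₂) ∈ E) (hx : x ∈ verts E) (hxH : x ∈ S.H) (hx₁ : x ≠ S.v₁) :
    Linked {f ∈ S.φ '' E | S.v₁ ∉ f} x S.v₂ := by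
  rcases eq_or_ne x S.v₂ with rfl | hx₂
  · exact .refl
  obtain ⟨a, b, ⟨hab, hab₂⟩, ⟨ha, ha₁⟩, hb, hxa⟩ :=
    (hcut S.v₂ x ⟨hx, hx₂⟩ S.v₁ ⟨mem_verts_left h, S.v₁_ne_v₂⟩).exists_exit
      (P := fun z => z ∈ S.H ∧ z ≠ S.v₁) ⟨hxH, hx₁⟩ (fun h => h.2 rfl)
  have ha₂ : a ≠ S.v₂ := fun ha₂ => hab₂ (ha₂ ▸ Sym2.mem_mk_left a b)
  have hb₁ : b = S.v₁ := by
    by_contra hb₁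
    exact hb ⟨S.mem_of_adj (hE hab) ha ha₁ ha₂, hb₁⟩
  subst hb₁
  have hφab : S.φ s(a, S.v₁) = s(a, S.v₂) := by
    rw [S.φ_of_mem_sym2 (Set.mk_mem_sym2_iff.2 ⟨ha, S.v₁_mem⟩), Sym2.map_mk, S.σ_of_ne ha₁ ha₂,
      S.σ_v₁]
  refine (hxa.mono ?_).tail ⟨⟨_, hab, hφab⟩, ?_⟩
  · rintro e ⟨⟨he, he₂⟩, heH⟩
    have hσe : e.map S.σ = e := by
      refine (Sym2.map_congr fun z hz => S.σ_of_ne (heH z hz).2 ?_).trans (congrFun Sym2.map_id' e)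
      exact fun hz₂ => he₂ (hz₂ ▸ hz)
    refine ⟨⟨e, he, by rw [S.φ_of_mem_sym2 (Set.mem_sym2_iff_subset.2 fun z hz => (heH z hz).1),
      hσe]⟩, fun he₁ => (heH _ he₁).2 rfl⟩
  · rw [Sym2.mem_iff, not_or]
    exact ⟨ha₁.symm, S.v₁_ne_v₂⟩

lemma linked_v₂ (hE : E ⊆ S.G.edgeSet) (hcut : NoCutVertex E) (h : s(S.v₁, S.v₂) ∈ E)
    (hx : x ∈ verts E) (hx₁ : x ≠ S.v₁) : Linked {f ∈ S.φ '' E | S.v₁ ∉ f} x S.v₂ := by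
  by_cases hxH : x ∈ S.H
  · exact S.linked_v₂_of_mem hE hcut h hx hxH hx₁
  · exact S.linked_v₂_of_notMem hE hcut h hx hxH

lemma noCutVertex_image_φ (hE : E ⊆ S.G.edgeSet) (hcut : NoCutVertex E)
    (h : s(S.v₁, S.v₂) ∈ E) : NoCutVertex (S.φ '' E) := by
  rintro v x ⟨hx, hxv : x ≠ v⟩ y ⟨hy, hyv : y ≠ v⟩
  rw [S.verts_image_φ h] at hx hy
  rcases eq_or_ne v S.v₁ with rfl | hv₁
  · exact (S.linked_v₂ hE hcut h hx hxv).trans (S.linked_v₂ hE hcut h hy hyv).symm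
  rcases eq_or_ne v S.v₂ with rfl | hv₂
  · have h' : s(S.swap.v₁, S.swap.v₂) ∈ E := Sym2.eq_swap ▸ h
    have hx' := S.swap.linked_v₂ hE hcut h' hx hxv
    have hy' := S.swap.linked_v₂ hE hcut h' hy hyv
    rw [swap_φ] at hx' hy'
    exact hx'.trans hy'.symm
  have hF : s(S.v₁, S.v₂) ∈ {e ∈ E | v ∉ e} := by
    refine ⟨h, ?_⟩
    rw [Sym2.mem_iff, not_or]
    exact ⟨hv₁, hv₂⟩
  refine (S.linked_image_φ hF (hcut v x ⟨hx, hxv⟩ y ⟨hy, hyv⟩)).mono ?_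
  rintro _ ⟨e, ⟨he, hve⟩, rfl⟩
  exact ⟨⟨e, he, rfl⟩, S.notMem_φ hve hv₁ hv₂⟩

lemma subset_sym2_or_mem_or_disjoint (hE : S.G.IsNonseparableEdgeSet E) :
    E ⊆ S.H.sym2 ∨ s(S.v₁, S.v₂) ∈ E ∨ ∀ e ∈ E, e ∉ S.H.sym2 := by
  rcases S.subset_sym2_or_mem_verts_or_disjoint hE.subset hE.noCutVertex with h | ⟨h₁, h₂⟩ | h
  exacts [.inl h, .inr (.inl (hE.induced _ h₁ _ h₂ S.adj)), .inr (.inr h)]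

lemma eq_or_eq_of_disjoint (hE : E ⊆ S.G.edgeSet) (hout : ∀ e ∈ E, e ∉ S.H.sym2)
    (hx : x ∈ verts E) (hxH : x ∈ S.H) : x = S.v₁ ∨ x = S.v₂ := by
  obtain ⟨e, he, hxe⟩ := hx
  induction e using Sym2.ind with
  | _ p q =>
    rcases Sym2.mem_iff.1 hxe with rfl | rfl
    · by_contra! h
      exact hout _ he ⟨hxH, S.mem_of_adj (hE he) hxH h.1 h.2⟩
    · by_contra! h
      exact hout _ he ⟨S.mem_of_adj (hE he).symm hxH h.1 h.2, hxH⟩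

lemma induced_image_φ (hE : S.G.IsNonseparableEdgeSet E) (hx : x ∈ verts (S.φ '' E))
    (hy : y ∈ verts (S.φ '' E)) (hxy : S.G'.Adj x y) : s(x, y) ∈ S.φ '' E := by
  rw [← mem_edgeSet, S.mem_edgeSet_iff_φ] at hxy
  refine ⟨S.φ s(x, y), ?_, S.φ_φ _⟩
  rcases S.subset_sym2_or_mem_or_disjoint hE with hA | hB | hC
  · rw [S.image_φ_of_subset_sym2 hA, verts_image_map] at hx hy
    obtain ⟨x, hx, rfl⟩ := hx
    obtain ⟨y, hy, rfl⟩ := hy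
    have hxH := verts_subset_of_subset_sym2 hA hx
    have hyH := verts_subset_of_subset_sym2 hA hy
    rw [S.φ_of_mem_sym2 (Set.mk_mem_sym2_iff.2 ⟨S.σ_mem_iff.2 hxH, S.σ_mem_iff.2 hyH⟩),
      Sym2.map_mk, Equiv.swap_apply_self, Equiv.swap_apply_self] at hxy ⊢
    exact hE.induced x hx y hy hxy
  · rw [S.verts_image_φ hB] at hx hy
    by_cases hH : s(x, y) ∈ S.H.sym2
    · rw [S.φ_of_mem_sym2 hH, Sym2.map_mk] at hxy ⊢
      exact hE.induced _ (S.σ_mem_verts hB hx) _ (S.σ_mem_verts hB hy) hxy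
    · rw [S.φ_of_notMem_sym2 hH] at hxy ⊢
      exact hE.induced _ hx _ hy hxy
  · rw [S.image_φ_of_disjoint hC] at hx hy
    by_cases hH : s(x, y) ∈ S.H.sym2
    · have hloop {z : V} (hz : z ∈ S.H) : S.φ s(z, z) ∉ S.G.edgeSet := by
        rw [S.φ_of_mem_sym2 (Set.mk_mem_sym2_iff.2 ⟨hz, hz⟩), Sym2.map_mk]
        exact fun h => (S.G.mem_edgeSet.1 h).ne rfl
      rcases S.eq_or_eq_of_disjoint hE.subset hC hx hH.1 with rfl | rfl <;>
        rcases S.eq_or_eq_of_disjoint hE.subset hC hy hH.2 with rfl | rfl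
      · exact absurd hxy (hloop hH.1)
      · rw [S.φ_v₁_v₂]
        exact hE.induced _ hx _ hy S.adj
      · rw [Sym2.eq_swap, S.φ_v₁_v₂]
        exact hE.induced _ hy _ hx S.adj
      · exact absurd hxy (hloop hH.1)
    · rw [S.φ_of_notMem_sym2 hH] at hxy ⊢
      exact hE.induced _ hx _ hy hxy

theorem isNonseparableEdgeSet_image_φ (hE : S.G.IsNonseparableEdgeSet E) :
    S.G'.IsNonseparableEdgeSet (S.φ '' E) := by
  have hlinks : IsConnected (S.φ '' E) ∧ NoCutVertex (S.φ '' E) := by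
    rcases S.subset_sym2_or_mem_or_disjoint hE with hA | hB | hC
    · rw [S.image_φ_of_subset_sym2 hA]
      exact ⟨hE.connected.image_map _, hE.noCutVertex.image_equiv _⟩
    · refine ⟨?_, S.noCutVertex_image_φ hE.subset hE.noCutVertex hB⟩
      intro x hx y hy
      rw [S.verts_image_φ hB] at hx hy
      exact S.linked_image_φ hB (hE.connected x hx y hy)
    · rw [S.image_φ_of_disjoint hC]
      exact ⟨hE.connected, hE.noCutVertex⟩
  exact ⟨S.image_φ_subset hE.subset, hE.nonempty.image _,
    fun _ hx _ hy => S.induced_image_φ hE hx hy, hlinks.1, hlinks.2⟩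

end EdgeSets

section Subgraphs

open Subgraph

variable {B : S.G.Subgraph}

noncomputable def flip (B : S.G.Subgraph) : S.G'.Subgraph :=
  S.G'.subgraphOfEdgeSet (S.φ '' B.edgeSet) (S.image_φ_subset B.edgeSet_subset)

@[simp]
lemma edgeSet_flip (B : S.G.Subgraph) : (S.flip B).edgeSet = S.φ '' B.edgeSet :=
  edgeSet_subgraphOfEdgeSet _

lemma flip_mono {B C : S.G.Subgraph} (h : B ≤ C) : S.flip B ≤ S.flip C :=
  subgraphOfEdgeSet_mono _ _ (Set.image_mono (edgeSet_mono h))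

lemma symm_flip_flip (hB : ∀ v ∈ B.verts, ∃ w, B.Adj v w) : S.symm.flip (S.flip B) = B :=
  (subgraphOfEdgeSet_congr _ B.edgeSet_subset
    ((congrArg (S.φ '' ·) (S.edgeSet_flip B)).trans (S.image_φ_image_φ _))).trans
    (subgraphOfEdgeSet_edgeSet hB)

lemma preconnected_G' (hG : S.G.Preconnected) : S.G'.Preconnected := fun u v =>
  (reachable_iff_reflTransGen u v).2 <| (S.linked_image_φ (F := S.G.edgeSet) S.adj
    ((reachable_iff_reflTransGen u v).1 (hG u v))).mono (S.image_φ_subset subset_rfl)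

lemma isNonseparable_flip (hB : B.IsNonseparable) (hE : B.edgeSet.Nonempty) :
    (S.flip B).IsNonseparable :=
  (isNonseparable_subgraphOfEdgeSet_iff _).2
    (S.isNonseparableEdgeSet_image_φ (hB.isNonseparableEdgeSet hE))

/-- Maximality transfers because `flip` is monotone and undone by the flip back from `G'`. -/
theorem isBlock_flip [Nontrivial V] (hG : S.G.Preconnected) (hB : B.IsBlock) :
    (S.flip B).IsBlock := by
  have hE := hB.edgeSet_nonempty hG
  obtain ⟨hBn, hmax⟩ := isBlock_iff.1 hB
  refine isBlock_iff.2 ⟨S.isNonseparable_flip hBn hE, fun C hC hle => ?_⟩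
  have hCE : C.edgeSet.Nonempty :=
    (hE.image S.φ).mono ((S.edgeSet_flip B).symm.subset.trans (edgeSet_mono hle))
  have hBC : B = S.symm.flip C := hmax _ (S.symm.isNonseparable_flip hC hCE)
    (S.symm_flip_flip (hB.exists_adj hG) ▸ S.symm.flip_mono hle)
  rw [hBC]
  exact S.symm.symm_flip_flip (exists_adj_of_connected hC.2.1 hCE)

end Subgraphs

section Walks

variable {x y : V}

def swapHom : S.G.deleteEdges S.H.sym2ᶜ →g S.G' where
  toFun := S.σ
  map_rel' {a b} h := by
    rw [deleteEdges_adj, Set.mem_compl_iff, not_not] at h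
    have := S.φ_mem_edgeSet (S.G.mem_edgeSet.2 h.1)
    rwa [S.φ_of_mem_sym2 h.2, Sym2.map_mk] at this

def swapWalk (p : S.G.Walk x y) (h : ∀ e ∈ p.edges, e ∈ S.H.sym2) :
    S.G'.Walk (S.σ x) (S.σ y) :=
  (p.transfer _ fun e he => by
    rw [edgeSet_deleteEdges, Set.sdiff_compl]
    exact ⟨p.edges_subset_edgeSet he, h e he⟩).map S.swapHom

lemma swapWalk_isPath {p : S.G.Walk x y} (hp : p.IsPath) (h : ∀ e ∈ p.edges, e ∈ S.H.sym2) :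
    (S.swapWalk p h).IsPath :=
  (hp.transfer _).map S.σ.injective

lemma swapWalk_isCycle {p : S.G.Walk x x} (hp : p.IsCycle) (h : ∀ e ∈ p.edges, e ∈ S.H.sym2) :
    (S.swapWalk p h).IsCycle :=
  (Walk.isCycle_map_iff_of_injective S.σ.injective).2 (hp.transfer _)

@[simp]
lemma length_swapWalk (p : S.G.Walk x y) (h : ∀ e ∈ p.edges, e ∈ S.H.sym2) :
    (S.swapWalk p h).length = p.length :=
  (Walk.length_map _ _).trans (Walk.length_transfer _ _)

lemma support_swapWalk (p : S.G.Walk x y) (h : ∀ e ∈ p.edges, e ∈ S.H.sym2) :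
    (S.swapWalk p h).support = p.support.map S.σ :=
  (Walk.support_map _ _).trans (congrArg _ (Walk.support_transfer _ _))

lemma edges_swapWalk (p : S.G.Walk x y) (h : ∀ e ∈ p.edges, e ∈ S.H.sym2) :
    (S.swapWalk p h).edges = p.edges.map (Sym2.map S.σ) :=
  (Walk.edges_map _ _).trans (congrArg _ (Walk.edges_transfer _ _))

lemma edgeSet_swapWalk_subset (p : S.G.Walk x y) (h : ∀ e ∈ p.edges, e ∈ S.H.sym2) :
    (S.swapWalk p h).edgeSet ⊆ S.φ '' p.edgeSet := by
  intro f hf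
  rw [Walk.mem_edgeSet, edges_swapWalk, List.mem_map] at hf
  obtain ⟨e, he, rfl⟩ := hf
  exact ⟨e, he, S.φ_of_mem_sym2 (h e he)⟩

lemma edges_sym2_of_isPath_to_v₂ {x y : V} (p : S.G.Walk x y) (hp : p.IsPath) (hy : y = S.v₂)
    (h₁ : S.v₁ ∉ p.support) :
    (x ∈ S.H → ∀ e ∈ p.edges, e ∈ S.H.sym2) ∧ (x ∉ S.H → ∀ e ∈ p.edges, e ∉ S.H.sym2) := by
  induction p with
  | nil => simp
  | @cons x c y hxc q ih =>
    obtain ⟨hq, hxq⟩ := (Walk.cons_isPath_iff _ _).1 hp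
    rw [Walk.support_cons, List.mem_cons, not_or] at h₁
    specialize ih hq hy h₁.2
    simp only [Walk.edges_cons, List.mem_cons, forall_eq_or_imp]
    refine ⟨fun hx => ?_, fun hx => ⟨fun h => hx h.1, fun e he => ?_⟩⟩
    · have hx₂ : x ≠ S.v₂ := fun h => hxq (h ▸ hy ▸ q.end_mem_support)
      have hc := S.mem_of_adj hxc hx (Ne.symm h₁.1) hx₂
      exact ⟨Set.mk_mem_sym2_iff.2 ⟨hx, hc⟩, ih.1 hc⟩
    by_cases hcH : c ∈ S.H
    · have hc₂ : c = S.v₂ := by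
        by_contra hc₂
        exact hx (S.mem_of_adj hxc.symm hcH (fun h => h₁.2 (h ▸ q.start_mem_support)) hc₂)
      subst hy hc₂
      rw [Walk.eq_nil_iff_nil.2 (Walk.isPath_iff_nil.1 hq)] at he
      simp at he
    · exact ih.2 hcH e he

lemma edges_sym2_of_isPath_v₁_v₂ (P : S.G.Walk x y) (hP : P.IsPath) (hx : x = S.v₁)
    (hy : y = S.v₂) : (∀ e ∈ P.edges, e ∈ S.H.sym2) ∨ ∀ e ∈ P.edges, e ∉ S.H.sym2 := by
  cases P with
  | nil => simp
  | @cons _ c _ hxc q =>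
    subst hx
    obtain ⟨hq, hxq⟩ := (Walk.cons_isPath_iff _ _).1 hP
    have := S.edges_sym2_of_isPath_to_v₂ q hq hy hxq
    simp only [Walk.edges_cons, List.mem_cons, forall_eq_or_imp]
    by_cases hc : c ∈ S.H
    · exact .inl ⟨Set.mk_mem_sym2_iff.2 ⟨S.v₁_mem, hc⟩, this.1 hc⟩
    · exact .inr ⟨fun h => hc h.2, this.2 hc⟩

lemma σ_mem_support {p : S.G.Walk S.v₁ S.v₂} {z : V} (hz : z ∈ p.support) :
    S.σ z ∈ p.support := by
  rcases eq_or_ne z S.v₁ with rfl | hz₁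
  · rw [S.σ_v₁]
    exact p.end_mem_support
  rcases eq_or_ne z S.v₂ with rfl | hz₂
  · rw [S.σ_v₂]
    exact p.start_mem_support
  · rwa [S.σ_of_ne hz₁ hz₂]

/-- A path from `v₁` to `v₂` stays inside `H` or outside it, so it is flipped as a whole:
relabelled by `σ` and reversed, or kept. -/
lemma exists_flip_path (P : S.G.Walk S.v₁ S.v₂) (hP : P.IsPath) :
    ∃ P' : S.G'.Walk S.v₁ S.v₂, P'.IsPath ∧ P'.length = P.length ∧
      (∀ z, z ∈ P'.support ↔ z ∈ P.support) ∧ P'.edgeSet ⊆ S.φ '' P.edgeSet := by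
  rcases S.edges_sym2_of_isPath_v₁_v₂ P hP rfl rfl with hin | hout
  · refine ⟨(S.swapWalk P hin).reverse.copy S.σ_v₂ S.σ_v₁, ?_, ?_, fun z => ?_, fun f hf => ?_⟩
    · rw [Walk.isPath_copy]
      exact (S.swapWalk_isPath hP hin).reverse
    · rw [Walk.length_copy, Walk.length_reverse, length_swapWalk]
    · rw [Walk.support_copy, Walk.support_reverse, List.mem_reverse, support_swapWalk,
        List.mem_map]
      refine ⟨?_, fun hz => ⟨S.σ z, S.σ_mem_support hz, Equiv.swap_apply_self _ _ _⟩⟩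
      rintro ⟨a, ha, rfl⟩
      exact S.σ_mem_support ha
    · rw [Walk.mem_edgeSet, Walk.edges_copy, Walk.edges_reverse, List.mem_reverse] at hf
      exact S.edgeSet_swapWalk_subset P hin hf
  · refine ⟨P.transfer S.G' fun e he => S.mem_edgeSet_of_notMem_sym2
      (P.edges_subset_edgeSet he) (hout e he), hP.transfer _, Walk.length_transfer _ _,
      fun z => by rw [Walk.support_transfer], fun f hf => ?_⟩
    rw [Walk.mem_edgeSet, Walk.edges_transfer] at hf
    exact ⟨f, hf, S.φ_of_notMem_sym2 (hout f hf)⟩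

lemma exists_flip_cycle_of_mem (c : S.G.Walk S.v₁ S.v₁) (hc : c.IsCycle)
    (h₂ : S.v₂ ∈ c.support) :
    ∃ d : S.G'.Walk S.v₁ S.v₁, d.IsCycle ∧ d.length = c.length ∧
      d.edgeSet ⊆ S.φ '' c.edgeSet := by
  set P := c.takeUntil S.v₂ h₂
  set Q := c.dropUntil S.v₂ h₂
  have hPQ : P.append Q = c := c.take_spec h₂
  have hP : P.IsPath := hc.isPath_takeUntil h₂
  have hQ : Q.IsPath := (hPQ ▸ hc).isPath_of_append_right (Walk.not_nil_of_ne S.v₁_ne_v₂)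
  obtain ⟨P', hP', hlP, hsP, heP⟩ := S.exists_flip_path P hP
  obtain ⟨Q', hQ', hlQ, hsQ, heQ⟩ : ∃ Q' : S.G'.Walk S.v₂ S.v₁, Q'.IsPath ∧
      Q'.length = Q.length ∧ (∀ z, z ∈ Q'.support ↔ z ∈ Q.support) ∧
      Q'.edgeSet ⊆ S.φ '' Q.edgeSet := by
    have := S.swap.exists_flip_path Q hQ
    rwa [swap_φ] at this
  have hlen : c.length = P.length + Q.length := by rw [← hPQ, Walk.length_append]
  refine ⟨P'.append Q', hP'.isCycle_append hQ' (fun z hzP hzQ => ?_) ?_, ?_, fun f hf => ?_⟩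
  · rw [hP'.mem_support_tail_iff, hsP, ← hP.mem_support_tail_iff] at hzP
    rw [hQ'.mem_support_tail_iff, hsQ, ← hQ.mem_support_tail_iff] at hzQ
    have hnd := hc.support_nodup
    rw [← hPQ, Walk.tail_support_append] at hnd
    exact List.disjoint_of_nodup_append hnd hzP hzQ
  · have := hc.three_le_length
    omega
  · rw [Walk.length_append, hlP, hlQ, hlen]
  · rw [Walk.mem_edgeSet, Walk.edges_append, List.mem_append] at hf
    rcases hf with hf | hf
    · obtain ⟨e, he, rfl⟩ := heP hf
      exact ⟨e, c.edges_takeUntil_subset_edges h₂ he, rfl⟩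
    · obtain ⟨e, he, rfl⟩ := heQ hf
      exact ⟨e, c.edges_dropUntil_subset_edges h₂ he, rfl⟩

theorem exists_flip_cycle {u : V} (c : S.G.Walk u u) (hc : c.IsCycle) :
    ∃ (w : V) (d : S.G'.Walk w w), d.IsCycle ∧ d.length = c.length ∧
      d.edgeSet ⊆ S.φ '' c.edgeSet := by
  have hE : c.edgeSet ⊆ S.G.edgeSet := fun e he => c.edges_subset_edgeSet he
  rcases S.subset_sym2_or_mem_verts_or_disjoint hE hc.noCutVertex with
    hin | ⟨⟨e₁, he₁, h₁⟩, ⟨e₂, he₂, h₂⟩⟩ | hout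
  · exact ⟨_, S.swapWalk c fun e he => hin he, S.swapWalk_isCycle hc _, S.length_swapWalk c _,
      S.edgeSet_swapWalk_subset c _⟩
  · have hv₁ := c.mem_support_of_mem_edges he₁ h₁
    obtain ⟨d, hd, hl, hde⟩ := S.exists_flip_cycle_of_mem (c.rotate _ hv₁) (hc.rotate hv₁)
      ((c.mem_support_rotate_iff _ hv₁).2 (c.mem_support_of_mem_edges he₂ h₂))
    exact ⟨_, d, hd, hl.trans (c.length_rotate _ hv₁),
      hde.trans (Set.image_mono fun e he => (c.rotate_edges _ hv₁).mem_iff.1 he)⟩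
  · refine ⟨u, c.transfer S.G' fun e he => S.mem_edgeSet_of_notMem_sym2 (hE he) (hout e he),
      hc.transfer _, Walk.length_transfer _ _, fun f hf => ?_⟩
    rw [Walk.mem_edgeSet, Walk.edges_transfer] at hf
    exact ⟨f, hf, S.φ_of_notMem_sym2 (hout f hf)⟩

end Walks

lemma cycleLengths_subset {B : S.G.Subgraph} {C : S.G'.Subgraph}
    (h : S.φ '' B.edgeSet ⊆ C.edgeSet) :
    {n | ∃ u, ∃ c : S.G.Walk u u, c.IsCycle ∧ (∀ f ∈ c.edges, f ∈ B.edgeSet) ∧ c.length = n} ⊆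
      {n | ∃ u, ∃ c : S.G'.Walk u u, c.IsCycle ∧ (∀ f ∈ c.edges, f ∈ C.edgeSet) ∧
        c.length = n} := by
  rintro _ ⟨u, c, hc, hB, rfl⟩
  obtain ⟨w, d, hd, hl, hde⟩ := S.exists_flip_cycle c hc
  exact ⟨w, d, hd, fun f hf => h (Set.image_mono (fun e he => hB e he) (hde hf)), hl⟩

lemma ncard_edgeSet_flip (B : S.G.Subgraph) : (S.flip B).edgeSet.ncard = B.edgeSet.ncard := by
  rw [edgeSet_flip, Set.ncard_image_of_injective _ S.φ_injective]

lemma maxCycleLength_flip (B : S.G.Subgraph) : maxCycleLength (S.flip B) = maxCycleLength B := by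
  refine congrArg sSup ((S.symm.cycleLengths_subset ?_).antisymm (S.cycleLengths_subset ?_))
  · exact ((congrArg (S.φ '' ·) (S.edgeSet_flip B)).trans (S.image_φ_image_φ _)).subset
  · exact (S.edgeSet_flip B).symm.subset

noncomputable def blockEquiv [Nontrivial V] (hG : S.G.Preconnected) :
    {B : S.G.Subgraph // B.IsBlock} ≃ {C : S.G'.Subgraph // C.IsBlock} where
  toFun B := ⟨S.flip B, S.isBlock_flip hG B.2⟩
  invFun C := ⟨S.symm.flip C.1, S.symm.isBlock_flip (S.preconnected_G' hG) C.2⟩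
  left_inv B := Subtype.ext (S.symm_flip_flip (B.2.exists_adj hG))
  right_inv C := Subtype.ext (S.symm.symm_flip_flip (C.2.exists_adj (S.preconnected_G' hG)))

end WhitneyFlip

theorem typeAFlip_block_bijection_general {V : Type*} [DecidableEq V]
    (G : SimpleGraph V) (hGconn : G.Connected)
    (v1 v2 : V) (hadj : G.Adj v1 v2)
    (H : Set V) (h1 : v1 ∈ H) (h2 : v2 ∈ H)
    (hHedge : ∀ x y : V, G.Adj x y → x ∈ H \ ({v1, v2} : Set V) → y ∈ H) :
    (∀ B : G.Subgraph, B.IsBlock → ∃ B' : (typeAFlip G v1 v2 H).Subgraph, B'.IsBlock ∧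
        Set.BijOn (phiA v1 v2 H) B.edgeSet B'.edgeSet) ∧
      ∃ F : {B : G.Subgraph // B.IsBlock} ≃
          {B' : (typeAFlip G v1 v2 H).Subgraph // B'.IsBlock},
        ∀ B : {B : G.Subgraph // B.IsBlock},
          Set.BijOn (phiA v1 v2 H) B.1.edgeSet (F B).1.edgeSet ∧
          B.1.edgeSet.ncard = (F B).1.edgeSet.ncard ∧
          maxCycleLength B.1 = maxCycleLength (F B).1 := by
  let S : WhitneyFlip V := ⟨G, typeAFlip G v1 v2 H, v1, v2, H, h1, h2, hadj,
    fun x y hxy hx hx₁ hx₂ => hHedge x y hxy ⟨hx, by simp [hx₁, hx₂]⟩,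
    fun _ => mem_edgeSet_typeAFlip_iff h1 h2⟩
  have : Nontrivial V := ⟨⟨v1, v2, hadj.ne⟩⟩
  have hbij (B : G.Subgraph) : Set.BijOn (phiA v1 v2 H) B.edgeSet (S.flip B).edgeSet := by
    rw [S.edgeSet_flip]
    exact S.φ_injective.injOn.bijOn_image
  refine ⟨fun B hB => ⟨S.flip B, S.isBlock_flip hGconn.preconnected hB, hbij B⟩,
    S.blockEquiv hGconn.preconnected, fun B =>
      ⟨hbij B, (S.ncard_edgeSet_flip B).symm, (S.maxCycleLength_flip B).symm⟩⟩

/-- for a connected simple graph `G` with at least one edge, the edge map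
`phiA` of the Type A Whitney flip maps the edge set of each block of `G` bijectively onto
the edge set of a block of the flipped graph, inducing a bijection between blocks which
preserves the number of edges and the maximum cycle length. -/
theorem typeAFlip_block_bijection {V : Type*} [Fintype V] [DecidableEq V]
    (G : SimpleGraph V) (hGconn : G.Connected) (hGedge : G.edgeSet.Nonempty)
    (v1 v2 : V) (hne : v1 ≠ v2) (hadj : G.Adj v1 v2)
    (H : Set V) (h1 : v1 ∈ H) (h2 : v2 ∈ H) (hHconn : (G.induce H).Connected)
    (hHedge : ∀ x y : V, G.Adj x y → x ∈ H \ ({v1, v2} : Set V) → y ∈ H) :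
    (∀ B : G.Subgraph, B.IsBlock → ∃ B' : (typeAFlip G v1 v2 H).Subgraph, B'.IsBlock ∧
        Set.BijOn (phiA v1 v2 H) B.edgeSet B'.edgeSet) ∧
      ∃ F : {B : G.Subgraph // B.IsBlock} ≃
          {B' : (typeAFlip G v1 v2 H).Subgraph // B'.IsBlock},
        ∀ B : {B : G.Subgraph // B.IsBlock},
          Set.BijOn (phiA v1 v2 H) B.1.edgeSet (F B).1.edgeSet ∧
          B.1.edgeSet.ncard = (F B).1.edgeSet.ncard ∧
          maxCycleLength B.1 = maxCycleLength (F B).1 :=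
  typeAFlip_block_bijection_general G hGconn v1 v2 hadj H h1 h2 hHedge
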